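/- Let R be an n × n^{m−1} column-stochastic matrix, v a stochastic vector, α < 1/(m−1), and let x be the unique stochastic solution of x = α R (x⊗⋯⊗x) + (1−α)v. Define the fixed-point iteration x^{(k+1)} = α R (x^{(k)} ⊗ ⋯ ⊗ x^{(k)}) + (1−α) v starting from a stochastic x^{(0)}. Then each x^{(k)} is stochastic and ‖x^{(k)} − x‖₁ ≤ (α(m−1))^k ‖x^{(0)} − x‖₁ ≤ 2(α(m−1))^k. -/

import Mathlib

/-!
The iteration map `F y = α R (y ⊗ ⋯ ⊗ y) + (1 - α) v` preserves stochastic vectors, and on them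
it is a contraction for the 1-norm with constant `α (m - 1)`: a column-stochastic matrix does not
increase the 1-norm, and telescoping `y ⊗ s - x ⊗ t = (y - x) ⊗ s + x ⊗ (s - t)` shows that
`y ↦ y^{⊗k}` is `k`-Lipschitz on stochastic vectors. Since `x = F x`, the error contracts by
`α (m - 1)` at every step, and the initial error is at most `‖X 0‖₁ + ‖x‖₁ = 2`.
-/

open Finset Matrix

def StochV {α : Type*} [Fintype α] (x : α → ℝ) : Prop :=
  (∀ i, 0 ≤ x i) ∧ ∑ i, x i = 1

def norm1 {α : Type*} [Fintype α] (x : α → ℝ) : ℝ := ∑ i, |x i|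

def kron {α β : Type*} (a : α → ℝ) (b : β → ℝ) : α × β → ℝ := fun p => a p.1 * b p.2

def kpow {n : ℕ} (x : Fin n → ℝ) (k : ℕ) : (Fin k → Fin n) → ℝ := fun f => ∏ i, x (f i)

def ColStoch {α β : Type*} [Fintype α] (R : Matrix α β ℝ) : Prop :=
  (∀ i j, 0 ≤ R i j) ∧ ∀ j, ∑ i, R i j = 1

section Norm1

variable {ι κ : Type*} [Fintype ι] [Fintype κ]

lemma norm1_add_le (a b : ι → ℝ) : norm1 (a + b) ≤ norm1 a + norm1 b := by
  unfold norm1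
  rw [← sum_add_distrib]
  exact sum_le_sum fun i _ => abs_add_le _ _

lemma norm1_sub_le (a b : ι → ℝ) : norm1 (a - b) ≤ norm1 a + norm1 b := by
  unfold norm1
  rw [← sum_add_distrib]
  exact sum_le_sum fun i _ => abs_sub _ _

lemma norm1_smul (c : ℝ) (a : ι → ℝ) : norm1 (c • a) = |c| * norm1 a := by
  simp only [norm1, Pi.smul_apply, smul_eq_mul, abs_mul, mul_sum]

lemma norm1_comp_equiv (e : κ ≃ ι) (a : ι → ℝ) : norm1 (a ∘ e) = norm1 a :=
  e.sum_comp fun i => |a i|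

lemma norm1_kron (a : ι → ℝ) (b : κ → ℝ) : norm1 (kron a b) = norm1 a * norm1 b := by
  simp only [norm1, kron, abs_mul, Fintype.sum_prod_type, sum_mul_sum]

lemma StochV.norm1_eq_one {x : ι → ℝ} (hx : StochV x) : norm1 x = 1 := by
  rw [norm1, ← hx.2]
  exact sum_congr rfl fun i _ => abs_of_nonneg (hx.1 i)

lemma StochV.norm1_sub_le_two {x y : ι → ℝ} (hx : StochV x) (hy : StochV y) :
    norm1 (x - y) ≤ 2 := by
  have := norm1_sub_le x y
  rw [hx.norm1_eq_one, hy.norm1_eq_one] at this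
  linarith

lemma norm1_kron_sub_kron_le {x y : ι → ℝ} {s t : κ → ℝ} (hx : StochV x) (hs : StochV s) :
    norm1 (kron y s - kron x t) ≤ norm1 (y - x) + norm1 (s - t) := by
  have hsplit : kron y s - kron x t = kron (y - x) s + kron x (s - t) := by
    ext p
    simp only [kron, Pi.sub_apply, Pi.add_apply]
    ring
  calc norm1 (kron y s - kron x t)
      ≤ norm1 (kron (y - x) s) + norm1 (kron x (s - t)) := hsplit ▸ norm1_add_le _ _
    _ = norm1 (y - x) + norm1 (s - t) := by
      rw [norm1_kron, norm1_kron, hs.norm1_eq_one, hx.norm1_eq_one, mul_one, one_mul]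

end Norm1

section ColStoch

variable {ι κ : Type*} [Fintype ι] [Fintype κ] {R : Matrix ι κ ℝ}

lemma StochV.mulVec (hR : ColStoch R) {y : κ → ℝ} (hy : StochV y) : StochV (R *ᵥ y) := by
  refine ⟨fun i => sum_nonneg fun j _ => mul_nonneg (hR.1 i j) (hy.1 j), ?_⟩
  simp only [Matrix.mulVec, dotProduct]
  rw [sum_comm]
  simp only [← sum_mul, hR.2, one_mul, hy.2]

lemma norm1_mulVec_le (hR : ColStoch R) (z : κ → ℝ) : norm1 (R *ᵥ z) ≤ norm1 z := by
  unfold norm1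
  calc ∑ i, |(R *ᵥ z) i| ≤ ∑ i, ∑ j, R i j * |z j| := by
        refine sum_le_sum fun i _ => (abs_sum_le_sum_abs _ _).trans_eq ?_
        simp only [abs_mul, abs_of_nonneg (hR.1 i _)]
    _ = ∑ j, |z j| := by
        rw [sum_comm]
        simp only [← sum_mul, hR.2, one_mul]

end ColStoch

section Kpow

variable {n : ℕ}

lemma kpow_succ_comp_consEquiv (y : Fin n → ℝ) (k : ℕ) :
    kpow y (k + 1) ∘ Fin.consEquiv (fun _ => Fin n) = kron y (kpow y k) := by
  ext ⟨a, t⟩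
  simp [kpow, kron, Fin.prod_univ_succ, Fin.consEquiv]

lemma StochV.kpow {x : Fin n → ℝ} (hx : StochV x) (k : ℕ) : StochV (kpow x k) := by
  refine ⟨fun f => prod_nonneg fun i _ => hx.1 _, ?_⟩
  unfold _root_.kpow
  rw [← Fintype.piFinset_univ, ← prod_univ_sum, hx.2, prod_const_one]

lemma norm1_kpow_sub_kpow_le {x y : Fin n → ℝ} (hx : StochV x) (hy : StochV y) (k : ℕ) :
    norm1 (kpow y k - kpow x k) ≤ k * norm1 (y - x) := by
  induction k with
  | zero => simp [norm1, kpow]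
  | succ k ih =>
    calc norm1 (kpow y (k + 1) - kpow x (k + 1))
        = norm1 ((kpow y (k + 1) - kpow x (k + 1)) ∘ Fin.consEquiv fun _ => Fin n) :=
          (norm1_comp_equiv _ _).symm
      _ = norm1 (kron y (kpow y k) - kron x (kpow x k)) := by
          rw [← kpow_succ_comp_consEquiv, ← kpow_succ_comp_consEquiv]
          rfl
      _ ≤ norm1 (y - x) + norm1 (kpow y k - kpow x k) :=
          norm1_kron_sub_kron_le hx (hy.kpow k)
      _ ≤ (k + 1 : ℕ) * norm1 (y - x) := by push_cast; linarith

end Kpow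

section PageRank

variable {n k : ℕ} {α : ℝ} {R : Matrix (Fin n) (Fin k → Fin n) ℝ} {v : Fin n → ℝ}

def pagerankStep (α : ℝ) (R : Matrix (Fin n) (Fin k → Fin n) ℝ) (v y : Fin n → ℝ) :
    Fin n → ℝ :=
  fun i => α * (R *ᵥ kpow y k) i + (1 - α) * v i

lemma StochV.pagerankStep {y : Fin n → ℝ} (hy : StochV y) (hR : ColStoch R) (hv : StochV v)
    (hα0 : 0 ≤ α) (hα1 : α ≤ 1) : StochV (pagerankStep α R v y) := by
  have hRy := (hy.kpow k).mulVec hR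
  refine ⟨fun i => add_nonneg (mul_nonneg hα0 (hRy.1 i)) (mul_nonneg (by linarith) (hv.1 i)), ?_⟩
  simp only [_root_.pagerankStep, sum_add_distrib, ← mul_sum, hRy.2, hv.2]
  ring

lemma norm1_pagerankStep_sub_le (hR : ColStoch R) (hα0 : 0 ≤ α) {x y : Fin n → ℝ}
    (hx : StochV x) (hy : StochV y) :
    norm1 (pagerankStep α R v y - pagerankStep α R v x) ≤ α * k * norm1 (y - x) := by
  have hdiff : pagerankStep α R v y - pagerankStep α R v x = α • R *ᵥ (kpow y k - kpow x k) := by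
    ext i
    simp only [pagerankStep, mulVec_sub, Pi.sub_apply, Pi.smul_apply, smul_eq_mul]
    ring
  calc norm1 (pagerankStep α R v y - pagerankStep α R v x)
      = α * norm1 (R *ᵥ (kpow y k - kpow x k)) := by rw [hdiff, norm1_smul, abs_of_nonneg hα0]
    _ ≤ α * norm1 (kpow y k - kpow x k) := by gcongr; exact norm1_mulVec_le hR _
    _ ≤ α * (k * norm1 (y - x)) := by gcongr; exact norm1_kpow_sub_kpow_le hx hy k
    _ = α * k * norm1 (y - x) := by ring

end PageRank

theorem stmt6 {n m : ℕ} (hm : 2 ≤ m)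
    (R : Matrix (Fin n) (Fin (m - 1) → Fin n) ℝ) (hR : ColStoch R)
    (v : Fin n → ℝ) (hv : StochV v)
    (α : ℝ) (hα0 : 0 ≤ α) (hα : α < 1 / ((m : ℝ) - 1))
    (x : Fin n → ℝ) (hx : StochV x)
    (hxe : x = fun i => α * R.mulVec (kpow x (m - 1)) i + (1 - α) * v i)
    (X : ℕ → (Fin n → ℝ)) (hX0 : StochV (X 0))
    (hrec : ∀ k, X (k + 1) = fun i => α * R.mulVec (kpow (X k) (m - 1)) i + (1 - α) * v i) :
    ∀ k, StochV (X k) ∧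
      norm1 (X k - x) ≤ (α * ((m : ℝ) - 1)) ^ k * norm1 (X 0 - x) ∧
      (α * ((m : ℝ) - 1)) ^ k * norm1 (X 0 - x) ≤ 2 * (α * ((m : ℝ) - 1)) ^ k := by
  have h1m : (1 : ℝ) ≤ m - 1 := by
    have : (2 : ℝ) ≤ m := by exact_mod_cast hm
    linarith
  have hcast : ((m - 1 : ℕ) : ℝ) = m - 1 := by rw [Nat.cast_sub (by omega), Nat.cast_one]
  have hα1 : α ≤ 1 := hα.le.trans ((div_le_one (by linarith)).2 h1m)
  have hρ : 0 ≤ α * ((m : ℝ) - 1) := mul_nonneg hα0 (by linarith)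
  have hstep : ∀ k, X (k + 1) = pagerankStep α R v (X k) := hrec
  have hfix : pagerankStep α R v x = x := hxe.symm
  have hstoch : ∀ k, StochV (X k) := by
    intro k
    induction k with
    | zero => exact hX0
    | succ k ih => exact hstep k ▸ ih.pagerankStep hR hv hα0 hα1
  intro k
  refine ⟨hstoch k, ?_, by
    rw [mul_comm 2]
    exact mul_le_mul_of_nonneg_left (hX0.norm1_sub_le_two hx) (pow_nonneg hρ k)⟩
  induction k with
  | zero => simp
  | succ k ih =>
    calc norm1 (X (k + 1) - x)
        = norm1 (pagerankStep α R v (X k) - pagerankStep α R v x) := by rw [hstep, hfix]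
      _ ≤ α * ((m : ℝ) - 1) * norm1 (X k - x) :=
          hcast ▸ norm1_pagerankStep_sub_le hR hα0 hx (hstoch k)
      _ ≤ α * ((m : ℝ) - 1) * ((α * ((m : ℝ) - 1)) ^ k * norm1 (X 0 - x)) := by gcongr
      _ = (α * ((m : ℝ) - 1)) ^ (k + 1) * norm1 (X 0 - x) := by ring
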